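/- Let α ∈ [0, π/2) and let A, B ∈ M_n(ℂ) be sector matrices of angle α. Then |det((A+B)^{-1})| ≤ (sec^{3n}(α)/4^{n}) · |det(I_n + A^{-1})| · |det(I_n + B^{-1})|. -/

import Mathlib

open Matrix
open scoped ComplexOrder

/-- The real (Hermitian) part of a complex matrix: `Re A = (A + Aᴴ)/2`. -/
noncomputable def matRe {n : ℕ} (A : Matrix (Fin n) (Fin n) ℂ) : Matrix (Fin n) (Fin n) ℂ :=
  (2⁻¹ : ℂ) • (A + Aᴴ)

/-- `A` is a sector matrix of angle `α`: its numerical range is contained in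
`S_α = {z : Re z > 0, |Im z| ≤ tan α · Re z}`. -/
def InSector {n : ℕ} (α : ℝ) (A : Matrix (Fin n) (Fin n) ℂ) : Prop :=
  ∀ x : Fin n → ℂ, star x ⬝ᵥ x = 1 →
    0 < (star x ⬝ᵥ A *ᵥ x).re ∧
      |(star x ⬝ᵥ A *ᵥ x).im| ≤ Real.tan α * (star x ⬝ᵥ A *ᵥ x).re

/-!
Write `H = Re A`. After a congruence `C = Wᴴ A W` with `Wᴴ H W = 1` one has `Re C = 1`, so
`C = 1 + i S` with `S = Im C` Hermitian, and `det A = det H · det C = det H · ∏ⱼ (1 + i λⱼ)`.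
Every `|1 + i λⱼ|` is at least `1`, and at most `sec α` when `A` is a sector matrix, because
then `|λⱼ| ≤ tan α`; hence `det H ≤ |det A| ≤ secⁿ α · det H`. The same congruence reduces
`4ⁿ det P det Q ≤ (det (P + Q))²` for positive definite `P`, `Q` to `4λ ≤ (1 + λ)²` on the
eigenvalues of `Wᴴ Q W`. Applied to `Re A + Re B`, `Re A + 1` and `Re B + 1`, these bounds give
`4ⁿ ≤ sec²ⁿ α · |det (A + B)| · |det (1 + A⁻¹)| · |det (1 + B⁻¹)|`, which implies the claim
since `sec α ≥ 1`.
-/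

open Complex

namespace Matrix

lemma star_dotProduct_conjTranspose_mulVec {ι R : Type*} [Fintype ι] [CommSemiring R]
    [StarRing R] (A : Matrix ι ι R) (x : ι → R) :
    star x ⬝ᵥ Aᴴ *ᵥ x = star (star x ⬝ᵥ A *ᵥ x) := by
  rw [dotProduct_mulVec, ← star_mulVec, ← star_dotProduct_star, star_star, dotProduct_comm]

lemma det_eq_det_mul_det_conjTranspose_mul_mul {ι R : Type*} [Fintype ι] [DecidableEq ι]
    [CommRing R] [StarRing R] {H W : Matrix ι ι R} (hW : Wᴴ * H * W = 1) (M : Matrix ι ι R) :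
    M.det = H.det * (Wᴴ * M * W).det := by
  have h := congrArg det hW
  rw [det_mul, det_mul, det_conjTranspose, det_one] at h
  rw [det_mul, det_mul, det_conjTranspose]
  linear_combination -M.det * h

section RCLike

variable {𝕜 ι : Type*} [RCLike 𝕜] [Fintype ι] [DecidableEq ι]

lemma IsHermitian.det_one_add_smul {S : Matrix ι ι 𝕜} (hS : S.IsHermitian) (c : 𝕜) :
    (1 + c • S).det = ∏ i, (1 + c * hS.eigenvalues i) := by
  set U := hS.eigenvectorUnitary
  have hdiag : Unitary.conjStarAlgAut 𝕜 _ (star U) (1 + c • S) =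
      diagonal fun i ↦ 1 + c * hS.eigenvalues i := by
    rw [map_add, map_one, map_smul, hS.conjStarAlgAut_star_eigenvectorUnitary, ← diagonal_one,
      ← diagonal_smul, diagonal_add]
    rfl
  rw [← det_diagonal, ← hdiag, Unitary.conjStarAlgAut_star_apply,
    det_conj_of_mul_eq_one (Unitary.coe_star_mul_self U) (Unitary.coe_mul_star_self U)]

lemma IsHermitian.exists_eigenvalues_eq {S : Matrix ι ι 𝕜} (hS : S.IsHermitian) (i : ι) :
    ∃ x : ι → 𝕜, star x ⬝ᵥ x = 1 ∧ hS.eigenvalues i = RCLike.re (star x ⬝ᵥ S *ᵥ x) := by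
  refine ⟨_, ?_, hS.eigenvalues_eq i⟩
  rw [dotProduct_comm, ← EuclideanSpace.inner_eq_star_dotProduct, inner_self_eq_norm_sq_to_K,
    hS.eigenvectorBasis.orthonormal.1 i]
  simp

open scoped MatrixOrder in
lemma PosDef.exists_conjTranspose_mul_mul_eq_one {H : Matrix ι ι 𝕜} (hH : H.PosDef) :
    ∃ W : Matrix ι ι 𝕜, IsUnit W ∧ Wᴴ * H * W = 1 := by
  obtain ⟨B, rfl⟩ := CStarAlgebra.nonneg_iff_eq_star_mul_self.mp hH.posSemidef.nonneg
  have hB : IsUnit B.det :=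
    isUnit_of_mul_isUnit_right (det_mul (star B) B ▸ (isUnit_iff_isUnit_det _).mp hH.isUnit)
  refine ⟨B⁻¹, isUnit_nonsing_inv_det B hB |> (isUnit_iff_isUnit_det _).mpr, ?_⟩
  rw [conjTranspose_nonsing_inv, star_eq_conjTranspose, Matrix.mul_assoc, Matrix.mul_assoc,
    mul_nonsing_inv _ hB, Matrix.mul_one,
    nonsing_inv_mul _ (by rwa [det_conjTranspose, isUnit_star])]

lemma PosSemidef.four_pow_mul_norm_det_le_norm_det_one_add_sq {R : Matrix ι ι 𝕜}
    (hR : R.PosSemidef) :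
    4 ^ Fintype.card ι * ‖R.det‖ ≤ ‖(1 + R).det‖ ^ 2 := by
  have h1R := hR.1.det_one_add_smul 1
  rw [one_smul] at h1R
  rw [h1R, hR.1.det_eq_prod_eigenvalues, norm_prod, norm_prod, ← Finset.prod_pow,
    ← Finset.card_univ, ← Finset.prod_const, ← Finset.prod_mul_distrib]
  refine Finset.prod_le_prod (fun i _ ↦ by positivity) fun i _ ↦ ?_
  have hnn := hR.eigenvalues_nonneg i
  rw [one_mul, ← RCLike.ofReal_one, ← RCLike.ofReal_add, RCLike.norm_ofReal, RCLike.norm_ofReal,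
    abs_of_nonneg hnn, abs_of_nonneg (by linarith)]
  nlinarith [sq_nonneg (1 - hR.1.eigenvalues i)]

lemma PosDef.four_pow_mul_norm_det_mul_norm_det_le_norm_det_add_sq {P Q : Matrix ι ι 𝕜}
    (hP : P.PosDef) (hQ : Q.PosSemidef) :
    4 ^ Fintype.card ι * (‖P.det‖ * ‖Q.det‖) ≤ ‖(P + Q).det‖ ^ 2 := by
  obtain ⟨W, -, hW⟩ := hP.exists_conjTranspose_mul_mul_eq_one
  have hR : (Wᴴ * Q * W).PosSemidef := hQ.conjTranspose_mul_mul_same W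
  have hPQ : Wᴴ * (P + Q) * W = 1 + Wᴴ * Q * W := by
    rw [Matrix.mul_add, Matrix.add_mul, hW]
  rw [det_eq_det_mul_det_conjTranspose_mul_mul hW Q,
    det_eq_det_mul_det_conjTranspose_mul_mul hW (P + Q), hPQ, norm_mul, norm_mul, mul_pow]
  calc 4 ^ Fintype.card ι * (‖P.det‖ * (‖P.det‖ * ‖(Wᴴ * Q * W).det‖))
      = ‖P.det‖ ^ 2 * (4 ^ Fintype.card ι * ‖(Wᴴ * Q * W).det‖) := by ring
    _ ≤ ‖P.det‖ ^ 2 * ‖(1 + Wᴴ * Q * W).det‖ ^ 2 := by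
      gcongr
      exact hR.four_pow_mul_norm_det_le_norm_det_one_add_sq

end RCLike

end Matrix

lemma norm_one_add_I_mul_le_inv_cos {α t : ℝ} (hcos : 0 < Real.cos α)
    (ht : |t| ≤ Real.tan α) : ‖1 + I * t‖ ≤ (Real.cos α)⁻¹ := by
  have hsec : 1 + Real.tan α ^ 2 = (Real.cos α)⁻¹ ^ 2 := by
    rw [inv_pow, ← Real.inv_one_add_tan_sq hcos.ne', inv_inv]
  rw [show 1 + I * t = (1 : ℝ) + t * I by push_cast; ring, norm_add_mul_I, Real.sqrt_le_iff,
    one_pow, ← hsec]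
  have ht2 : t ^ 2 ≤ Real.tan α ^ 2 := by
    rw [← sq_abs]
    exact pow_le_pow_left₀ (abs_nonneg t) ht 2
  exact ⟨by positivity, by linarith⟩

section Sector

variable {n : ℕ} {α : ℝ}

noncomputable def matIm (A : Matrix (Fin n) (Fin n) ℂ) : Matrix (Fin n) (Fin n) ℂ :=
  (2 * I)⁻¹ • (A - Aᴴ)

lemma matRe_isHermitian (A : Matrix (Fin n) (Fin n) ℂ) : (matRe A).IsHermitian := by
  rw [IsHermitian, matRe, conjTranspose_smul, conjTranspose_add, conjTranspose_conjTranspose,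
    add_comm]
  simp

lemma matIm_isHermitian (A : Matrix (Fin n) (Fin n) ℂ) : (matIm A).IsHermitian := by
  rw [IsHermitian, matIm, conjTranspose_smul, conjTranspose_sub, conjTranspose_conjTranspose,
    ← neg_sub A, smul_neg, ← neg_smul]
  congr 1
  simp

lemma matRe_add_I_smul_matIm (A : Matrix (Fin n) (Fin n) ℂ) : matRe A + I • matIm A = A := by
  rw [matRe, matIm, smul_smul, show I * (2 * I)⁻¹ = 2⁻¹ by field_simp]
  module

lemma star_dotProduct_matRe_mulVec (A : Matrix (Fin n) (Fin n) ℂ) (x : Fin n → ℂ) :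
    star x ⬝ᵥ matRe A *ᵥ x = (star x ⬝ᵥ A *ᵥ x).re := by
  rw [re_eq_add_conj, matRe, smul_mulVec, add_mulVec, dotProduct_smul, dotProduct_add,
    star_dotProduct_conjTranspose_mulVec, smul_eq_mul, star_def, div_eq_inv_mul]

lemma star_dotProduct_matIm_mulVec (A : Matrix (Fin n) (Fin n) ℂ) (x : Fin n → ℂ) :
    star x ⬝ᵥ matIm A *ᵥ x = (star x ⬝ᵥ A *ᵥ x).im := by
  rw [im_eq_sub_conj, matIm, smul_mulVec, sub_mulVec, dotProduct_smul, dotProduct_sub,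
    star_dotProduct_conjTranspose_mulVec, smul_eq_mul, star_def, div_eq_inv_mul]

lemma matRe_add (A B : Matrix (Fin n) (Fin n) ℂ) : matRe (A + B) = matRe A + matRe B := by
  rw [matRe, matRe, matRe, conjTranspose_add]
  module

lemma matRe_one : matRe (1 : Matrix (Fin n) (Fin n) ℂ) = 1 := by
  rw [matRe, conjTranspose_one, ← two_smul ℂ, smul_smul, inv_mul_cancel₀ two_ne_zero,
    one_smul]

lemma matRe_conjTranspose_mul_mul (A W : Matrix (Fin n) (Fin n) ℂ) :
    matRe (Wᴴ * A * W) = Wᴴ * matRe A * W := by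
  simp only [matRe, conjTranspose_mul, conjTranspose_conjTranspose, Matrix.mul_smul,
    Matrix.smul_mul, Matrix.mul_add, Matrix.add_mul, Matrix.mul_assoc]

lemma InSector.of_ne_zero {A : Matrix (Fin n) (Fin n) ℂ} (hA : InSector α A) {x : Fin n → ℂ}
    (hx : x ≠ 0) :
    0 < (star x ⬝ᵥ A *ᵥ x).re ∧
      |(star x ⬝ᵥ A *ᵥ x).im| ≤ Real.tan α * (star x ⬝ᵥ A *ᵥ x).re := by
  have hpos : 0 < star x ⬝ᵥ x := dotProduct_star_self_pos_iff.mpr hx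
  set c := (star x ⬝ᵥ x).re
  have hc : star x ⬝ᵥ x = c := eq_re_of_ofReal_le hpos.le
  have hc0 : 0 < c := by simpa [hc] using hpos
  set r := (√c)⁻¹
  have hr : r ^ 2 * c = 1 := by
    rw [inv_pow, Real.sq_sqrt hc0.le, inv_mul_cancel₀ hc0.ne']
  have hunit : star (r • x) ⬝ᵥ r • x = 1 := by
    rw [star_smul, smul_dotProduct, dotProduct_smul, hc, star_trivial, smul_smul, ← sq,
      real_smul, ← ofReal_mul, hr, ofReal_one]
  have hform : star (r • x) ⬝ᵥ A *ᵥ (r • x) = r ^ 2 • (star x ⬝ᵥ A *ᵥ x) := by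
    rw [star_smul, smul_dotProduct, mulVec_smul, dotProduct_smul, star_trivial, smul_smul, ← sq]
  obtain ⟨hre, him⟩ := hA _ hunit
  rw [hform, smul_re, smul_eq_mul] at hre
  rw [hform, smul_re, smul_im, smul_eq_mul, smul_eq_mul, abs_mul, abs_sq, mul_left_comm] at him
  have hr0 : 0 < r ^ 2 := by positivity
  exact ⟨pos_of_mul_pos_right hre hr0.le, le_of_mul_le_mul_left him hr0⟩

lemma InSector.matRe_posDef {A : Matrix (Fin n) (Fin n) ℂ} (hA : InSector α A) :
    (matRe A).PosDef :=
  .of_dotProduct_mulVec_pos (matRe_isHermitian A) fun x hx ↦ by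
    rw [star_dotProduct_matRe_mulVec, zero_lt_real]
    exact (hA.of_ne_zero hx).1

lemma InSector.conjTranspose_mul_mul {A W : Matrix (Fin n) (Fin n) ℂ} (hA : InSector α A)
    (hW : IsUnit W) : InSector α (Wᴴ * A * W) := by
  intro x hx
  have hform : star x ⬝ᵥ (Wᴴ * A * W) *ᵥ x = star (W *ᵥ x) ⬝ᵥ A *ᵥ (W *ᵥ x) := by
    rw [← mulVec_mulVec, ← mulVec_mulVec, dotProduct_mulVec, star_mulVec]
  have hx0 : x ≠ 0 := by rintro rfl; simp at hx
  rw [hform]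
  exact hA.of_ne_zero ((mulVec_injective_iff_isUnit.mpr hW).ne_iff' (mulVec_zero W) |>.mpr hx0)

lemma det_eq_prod_one_add_I_mul {C : Matrix (Fin n) (Fin n) ℂ} (hC : matRe C = 1) :
    C.det = ∏ i, (1 + I * (matIm_isHermitian C).eigenvalues i) := by
  conv_lhs => rw [← matRe_add_I_smul_matIm C, hC]
  exact (matIm_isHermitian C).det_one_add_smul I

lemma one_le_norm_det_of_matRe_eq_one {C : Matrix (Fin n) (Fin n) ℂ} (hC : matRe C = 1) :
    1 ≤ ‖C.det‖ := by
  rw [det_eq_prod_one_add_I_mul hC, norm_prod]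
  exact Finset.one_le_prod fun i _ ↦ by
    simpa using re_le_norm (1 + I * ((matIm_isHermitian C).eigenvalues i : ℂ))

lemma InSector.norm_det_le_of_matRe_eq_one {C : Matrix (Fin n) (Fin n) ℂ} (hC : InSector α C)
    (hRe : matRe C = 1) (hcos : 0 < Real.cos α) : ‖C.det‖ ≤ (Real.cos α)⁻¹ ^ n := by
  rw [det_eq_prod_one_add_I_mul hRe, norm_prod]
  refine (Finset.prod_le_prod (g := fun _ ↦ (Real.cos α)⁻¹) (fun i _ ↦ norm_nonneg _)
    fun i _ ↦ ?_).trans_eq (Fin.prod_const n _)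
  obtain ⟨x, hx, heig⟩ := (matIm_isHermitian C).exists_eigenvalues_eq i
  have hre : (star x ⬝ᵥ C *ᵥ x).re = 1 := by
    have h := star_dotProduct_matRe_mulVec C x
    rw [hRe, one_mulVec, hx] at h
    exact_mod_cast h.symm
  rw [star_dotProduct_matIm_mulVec] at heig
  have him := (hC x hx).2
  rw [hre, mul_one] at him
  exact norm_one_add_I_mul_le_inv_cos hcos (by simpa [heig] using him)

lemma norm_det_matRe_le_norm_det {A : Matrix (Fin n) (Fin n) ℂ} (hA : (matRe A).PosDef) :
    ‖(matRe A).det‖ ≤ ‖A.det‖ := by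
  obtain ⟨W, -, hW⟩ := hA.exists_conjTranspose_mul_mul_eq_one
  rw [det_eq_det_mul_det_conjTranspose_mul_mul hW A, norm_mul]
  exact le_mul_of_one_le_right (norm_nonneg _)
    (one_le_norm_det_of_matRe_eq_one (by rw [matRe_conjTranspose_mul_mul, hW]))

lemma norm_det_pos_of_matRe_posDef {A : Matrix (Fin n) (Fin n) ℂ} (hA : (matRe A).PosDef) :
    0 < ‖A.det‖ :=
  (norm_pos_iff.mpr hA.det_pos.ne').trans_le (norm_det_matRe_le_norm_det hA)

lemma InSector.norm_det_le {A : Matrix (Fin n) (Fin n) ℂ} (hA : InSector α A)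
    (hcos : 0 < Real.cos α) : ‖A.det‖ ≤ (Real.cos α)⁻¹ ^ n * ‖(matRe A).det‖ := by
  obtain ⟨W, hWu, hW⟩ := hA.matRe_posDef.exists_conjTranspose_mul_mul_eq_one
  rw [det_eq_det_mul_det_conjTranspose_mul_mul hW A, norm_mul, mul_comm]
  gcongr
  exact (hA.conjTranspose_mul_mul hWu).norm_det_le_of_matRe_eq_one
    (by rw [matRe_conjTranspose_mul_mul, hW]) hcos

lemma four_pow_mul_norm_det_matRe_mul_le_norm_det_add_sq {A B : Matrix (Fin n) (Fin n) ℂ}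
    (hA : (matRe A).PosDef) (hB : (matRe B).PosDef) :
    4 ^ n * (‖(matRe A).det‖ * ‖(matRe B).det‖) ≤ ‖(A + B).det‖ ^ 2 := by
  have hAB : (matRe (A + B)).PosDef := matRe_add A B ▸ hA.add hB
  calc _ ≤ ‖(matRe (A + B)).det‖ ^ 2 := by
        simpa [matRe_add] using
          hA.four_pow_mul_norm_det_mul_norm_det_le_norm_det_add_sq hB.posSemidef
    _ ≤ _ := by gcongr; exact norm_det_matRe_le_norm_det hAB

lemma InSector.four_pow_le_mul_norm_det_one_add_inv_sq {A : Matrix (Fin n) (Fin n) ℂ}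
    (hA : InSector α A) (hcos : 0 < Real.cos α) :
    4 ^ n ≤ (Real.cos α)⁻¹ ^ (2 * n) * ‖(matRe A).det‖ * ‖(1 + A⁻¹).det‖ ^ 2 := by
  have hRe := hA.matRe_posDef
  have hdet := norm_det_pos_of_matRe_posDef hRe
  have hinv : (1 + A⁻¹).det = (A + 1).det / A.det := by
    have h : 1 + A⁻¹ = A⁻¹ * (A + 1) := by
      rw [Matrix.mul_add, nonsing_inv_mul A (isUnit_iff_ne_zero.mpr (norm_pos_iff.mp hdet)),
        Matrix.mul_one, add_comm]
    rw [h, det_mul, det_nonsing_inv, Ring.inverse_eq_inv', div_eq_inv_mul]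
  have hA1 : 4 ^ n * ‖(matRe A).det‖ ≤ ‖(A + 1).det‖ ^ 2 := by
    have h :=
      four_pow_mul_norm_det_matRe_mul_le_norm_det_add_sq hRe (matRe_one (n := n) ▸ PosDef.one)
    rwa [matRe_one, det_one, norm_one, mul_one] at h
  rw [hinv, norm_div, div_pow, mul_div_assoc', le_div_iff₀ (by positivity)]
  calc 4 ^ n * ‖A.det‖ ^ 2 ≤ 4 ^ n * ((Real.cos α)⁻¹ ^ n * ‖(matRe A).det‖) ^ 2 := by
        gcongr; exact hA.norm_det_le hcos
    _ = (Real.cos α)⁻¹ ^ (2 * n) * ‖(matRe A).det‖ * (4 ^ n * ‖(matRe A).det‖) := by ring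
    _ ≤ _ := by gcongr

lemma InSector.four_pow_le_norm_det_add_mul {A B : Matrix (Fin n) (Fin n) ℂ} (hA : InSector α A)
    (hB : InSector α B) (hcos : 0 < Real.cos α) :
    4 ^ n ≤ (Real.cos α)⁻¹ ^ (2 * n) *
      (‖(A + B).det‖ * (‖(1 + A⁻¹).det‖ * ‖(1 + B⁻¹).det‖)) := by
  have hAB := four_pow_mul_norm_det_matRe_mul_le_norm_det_add_sq hA.matRe_posDef hB.matRe_posDef
  have hab : ‖(matRe A).det‖ * ‖(matRe B).det‖ ≤ ‖(A + B).det‖ ^ 2 :=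
    le_trans (le_mul_of_one_le_left (by positivity) (one_le_pow₀ (by norm_num))) hAB
  refine le_of_pow_le_pow_left₀ two_ne_zero (by positivity) ?_
  calc (4 ^ n : ℝ) ^ 2 = 4 ^ n * 4 ^ n := sq _
    _ ≤ ((Real.cos α)⁻¹ ^ (2 * n) * ‖(matRe A).det‖ * ‖(1 + A⁻¹).det‖ ^ 2) *
        ((Real.cos α)⁻¹ ^ (2 * n) * ‖(matRe B).det‖ * ‖(1 + B⁻¹).det‖ ^ 2) :=
      mul_le_mul (hA.four_pow_le_mul_norm_det_one_add_inv_sq hcos)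
        (hB.four_pow_le_mul_norm_det_one_add_inv_sq hcos) (by positivity) (by positivity)
    _ = ((Real.cos α)⁻¹ ^ (2 * n)) ^ 2 * (‖(matRe A).det‖ * ‖(matRe B).det‖) *
        (‖(1 + A⁻¹).det‖ * ‖(1 + B⁻¹).det‖) ^ 2 := by ring
    _ ≤ ((Real.cos α)⁻¹ ^ (2 * n)) ^ 2 * ‖(A + B).det‖ ^ 2 *
        (‖(1 + A⁻¹).det‖ * ‖(1 + B⁻¹).det‖) ^ 2 := by gcongr
    _ = _ := by ring

end Sector

/-- For sector matrices `A, B` of angle `α ∈ [0, π/2)`,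
`|det((A+B)⁻¹)| ≤ (sec^{3n}(α)/4ⁿ)|det(I + A⁻¹)||det(I + B⁻¹)|`. -/
theorem stmt8 {n : ℕ} {α : ℝ} (hα : α ∈ Set.Ico 0 (Real.pi / 2))
    {A B : Matrix (Fin n) (Fin n) ℂ} (hA : InSector α A) (hB : InSector α B) :
    ‖((A + B)⁻¹).det‖ ≤
      (Real.cos α)⁻¹ ^ (3 * n) / 4 ^ n *
        (‖(1 + A⁻¹).det‖ * ‖(1 + B⁻¹).det‖) := by
  have hcos : 0 < Real.cos α :=
    Real.cos_pos_of_mem_Ioo ⟨by linarith [hα.1, Real.pi_pos], hα.2⟩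
  have hsec : 1 ≤ (Real.cos α)⁻¹ := (one_le_inv₀ hcos).mpr (Real.cos_le_one α)
  have hkey := hA.four_pow_le_norm_det_add_mul hB hcos
  have hdet : 0 < ‖(A + B).det‖ :=
    norm_det_pos_of_matRe_posDef (matRe_add A B ▸ hA.matRe_posDef.add hB.matRe_posDef)
  rw [det_nonsing_inv, Ring.inverse_eq_inv', norm_inv, div_mul_eq_mul_div,
    le_div_iff₀ (by positivity), inv_mul_le_iff₀ hdet]
  calc (4 : ℝ) ^ n ≤ (Real.cos α)⁻¹ ^ (2 * n) *
      (‖(A + B).det‖ * (‖(1 + A⁻¹).det‖ * ‖(1 + B⁻¹).det‖)) := hkey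
    _ ≤ (Real.cos α)⁻¹ ^ (3 * n) *
      (‖(A + B).det‖ * (‖(1 + A⁻¹).det‖ * ‖(1 + B⁻¹).det‖)) := by
        gcongr
        norm_num
    _ = _ := by ring
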